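/- arXiv:1812.01062 — 3 statements merged into one kernel-verified Lean document; each statement's English description precedes it below -/
import Mathlib

section
/- Let a, a' ∈ ℝ^n and b, b' ∈ ℝ with A := Σᵢ (a'ᵢ - aᵢ) > 0, and let c ∈ ℝ, such that the two affine functions x ↦ a·x + b and x ↦ a'·x + b' agree on the hyperplane {x : Σᵢ(a'ᵢ - aᵢ)xᵢ + b - b' = 0}. Suppose c + Σᵢ aᵢ ≤ 0 and c + Σᵢ a'ᵢ ≥ 0, and all |aᵢ|, |a'ᵢ| ≤ L. Define G(x) = c·t(x) + a·(x + t(x)𝟙) + b, where t(x) is the unique real with x + t(x)𝟙 on the hyperplane. Then for each coordinate k, the partial derivative of G in direction k lies between min(aₖ, a'ₖ) and max(aₖ, a'ₖ); in particular it is bounded in absolute value by L. -/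
/-- Key computation in the value-iteration Lipschitz bound: delaying along the
diagonal `𝟙` until the border between two affine pieces. The difference quotient
of `G(x) = c·t(x) + a·(x + t(x)𝟙) + b` in any coordinate direction lies between
`min(aₖ, a'ₖ)` and `max(aₖ, a'ₖ)`, hence is bounded by `L`. -/
theorem stmt8 (n : ℕ) (a a' : Fin n → ℝ) (b b' c L : ℝ)
    (hA : 0 < ∑ i, (a' i - a i))
    (hagree : ∀ x : Fin n → ℝ, (∑ i, (a' i - a i) * x i) + b - b' = 0 →
      (∑ i, a i * x i) + b = (∑ i, a' i * x i) + b')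
    (hc1 : c + ∑ i, a i ≤ 0) (hc2 : 0 ≤ c + ∑ i, a' i)
    (hL : ∀ i, |a i| ≤ L ∧ |a' i| ≤ L)
    (t : (Fin n → ℝ) → ℝ)
    (ht : ∀ x, (∑ i, (a' i - a i) * (x i + t x)) + b - b' = 0)
    (G : (Fin n → ℝ) → ℝ)
    (hG : ∀ x, G x = c * t x + (∑ i, a i * (x i + t x)) + b)
    (k : Fin n) (x : Fin n → ℝ) (lam : ℝ) (hlam : lam ≠ 0) :
    min (a k) (a' k) ≤ (G (Function.update x k (x k + lam)) - G x) / lam ∧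
    (G (Function.update x k (x k + lam)) - G x) / lam ≤ max (a k) (a' k) ∧
    |(G (Function.update x k (x k + lam)) - G x) / lam| ≤ L := by
  set y : Fin n → ℝ := Function.update x k (x k + lam) with hy
  set A : ℝ := ∑ i, (a' i - a i) with hAdef
  have hAne : A ≠ 0 := ne_of_gt hA
  have hdiff : ∀ i, y i - x i = if i = k then lam else 0 := by
    intro i
    by_cases h : i = k
    · subst h; simp [hy]
    · simp [hy, Function.update_of_ne h, h]
  -- Δt computation
  have hsum : ∀ z : Fin n → ℝ, (∑ i, (a' i - a i) * (z i + t z)) =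
      (∑ i, (a' i - a i) * z i) + A * t z := by
    intro z
    rw [hAdef, Finset.sum_mul]
    rw [← Finset.sum_add_distrib]
    congr 1; ext i; ring
  have hty := ht y
  have htx := ht x
  rw [hsum] at hty htx
  have hyx : (∑ i, (a' i - a i) * y i) = (∑ i, (a' i - a i) * x i) + (a' k - a k) * lam := by
    have : (∑ i, (a' i - a i) * y i) - (∑ i, (a' i - a i) * x i)
        = ∑ i, (a' i - a i) * (y i - x i) := by
      rw [← Finset.sum_sub_distrib]; congr 1; ext i; ring
    have h2 : (∑ i, (a' i - a i) * (y i - x i)) = (a' k - a k) * lam := by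
      rw [Finset.sum_eq_single k]
      · rw [hdiff k]; simp
      · intro i _ hik; rw [hdiff i]; simp [hik]
      · intro h; exact absurd (Finset.mem_univ k) h
    linarith
  have hΔt : A * (t y - t x) = -((a' k - a k) * lam) := by
    have := hty
    rw [hyx] at this
    nlinarith [htx]
  -- G difference
  set S : ℝ := ∑ i, a i with hSdef
  have hsum2 : ∀ z : Fin n → ℝ, (∑ i, a i * (z i + t z)) =
      (∑ i, a i * z i) + S * t z := by
    intro z
    rw [hSdef, Finset.sum_mul, ← Finset.sum_add_distrib]
    congr 1; ext i; ring
  have hGdiff : G y - G x = (c + S) * (t y - t x) + a k * lam := by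
    rw [hG y, hG x, hsum2, hsum2]
    have h2 : (∑ i, a i * y i) - (∑ i, a i * x i) = a k * lam := by
      have h3 : (∑ i, a i * y i) - (∑ i, a i * x i) = ∑ i, a i * (y i - x i) := by
        rw [← Finset.sum_sub_distrib]; congr 1; ext i; ring
      rw [h3, Finset.sum_eq_single k]
      · rw [hdiff k]; simp
      · intro i _ hik; rw [hdiff i]; simp [hik]
      · intro h; exact absurd (Finset.mem_univ k) h
    linarith
  set μ : ℝ := -(c + S) / A with hμdef
  have hμ0 : 0 ≤ μ := by
    apply div_nonneg _ (le_of_lt hA); linarith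
  have hμ1 : μ ≤ 1 := by
    rw [div_le_one hA]
    have hAS : A + S = ∑ i, a' i := by
      rw [hAdef, hSdef, ← Finset.sum_add_distrib]; congr 1; ext i; ring
    linarith
  have hq : (G y - G x) / lam = (1 - μ) * a k + μ * a' k := by
    have hΔt2 : t y - t x = -((a' k - a k) * lam) / A := by
      field_simp at hΔt ⊢; linarith
    rw [hGdiff, hΔt2, hμdef]
    field_simp
    ring
  have hmin : min (a k) (a' k) ≤ (G y - G x) / lam := by
    rw [hq]
    nlinarith [min_le_left (a k) (a' k), min_le_right (a k) (a' k)]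
  have hmax : (G y - G x) / lam ≤ max (a k) (a' k) := by
    rw [hq]
    nlinarith [le_max_left (a k) (a' k), le_max_right (a k) (a' k)]
  refine ⟨hmin, hmax, ?_⟩
  obtain ⟨h1, h2⟩ := hL k
  rw [abs_le] at h1 h2 ⊢
  constructor
  · have : -L ≤ min (a k) (a' k) := le_min h1.1 h2.1
    linarith
  · have : max (a k) (a' k) ≤ L := max_le h1.2 h2.2
    linarith
end

section
/- Let G be a finite directed graph with integer weights where every cycle has weight in {0} ∪ (-∞,-1] ∪ [1,∞) (viewed as integers: weight 0 or |weight| ≥ 1), all cycles in the same SCC having the same sign. Fix B = n² where n is the number of vertices. If there exists a cycle ρ and two closed walks following ρ in a product construction (pairs of vertices) with one of weight 0 and one of nonzero weight, then there exists such a cycle of length at most B. -/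
/-- A walk in a directed graph with adjacency `A`, given as a list of edges. -/
def IsWalk {V : Type*} (A : V → V → Prop) (l : List (V × V)) : Prop :=
  (∀ e ∈ l, A e.1 e.2) ∧ l.Chain' (fun e f => e.2 = f.1)

/-- A cycle: a nonempty walk whose last edge ends where the first edge starts. -/
def IsCycle {V : Type*} (A : V → V → Prop) (l : List (V × V)) : Prop :=
  IsWalk A l ∧ l ≠ [] ∧ l.getLast?.map Prod.snd = l.head?.map Prod.fst

/-- The weight of a walk: the sum of its edge weights. -/
def walkWeight {V : Type*} (w : V → V → ℤ) (l : List (V × V)) : ℤ :=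
  (l.map fun e => w e.1 e.2).sum

/-- Two vertices are in the same strongly connected component. -/
def SameSCC {V : Type*} (A : V → V → Prop) (u v : V) : Prop :=
  Relation.ReflTransGen A u v ∧ Relation.ReflTransGen A v u

/-- The product graph on pairs of vertices: both components move along edges. -/
def prodAdj {V : Type*} (A : V → V → Prop) (p q : V × V) : Prop :=
  A p.1 q.1 ∧ A p.2 q.2

/-!
A product cycle longer than `n²` visits some pair of vertices twice; rotating it to start at the
first visit, it splits into two shorter product cycles. Their first projections are cycles inside
one SCC of the graph, so their first weights have a common sign; as they sum to `0`, both vanish.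
The second weights sum to a nonzero number, so one of the two pieces is again a witness, and a
witness of minimal length has length at most `n²`.
-/

open List

theorem List.exists_eq_append_cons_append_cons_of_not_nodup_map {α β : Type*} {g : α → β} :
    ∀ {l : List α}, ¬(l.map g).Nodup →
      ∃ P e Q f R, l = P ++ e :: Q ++ f :: R ∧ g e = g f
  | [], h => absurd nodup_nil h
  | a :: t, h => by
    rw [map_cons, nodup_cons, not_and_or, not_not] at h
    rcases h with hmem | hdup
    · obtain ⟨f, hf, hfa⟩ := mem_map.mp hmem
      obtain ⟨Q, R, rfl⟩ := append_of_mem hf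
      exact ⟨[], a, Q, f, R, rfl, hfa.symm⟩
    · obtain ⟨P, e, Q, f, R, rfl, hef⟩ := exists_eq_append_cons_append_cons_of_not_nodup_map hdup
      exact ⟨a :: P, e, Q, f, R, rfl, hef⟩

section Walks

variable {α β : Type*} {A : α → α → Prop} {l : List (α × α)}

theorem walkWeight_append (w : α → α → ℤ) (l l' : List (α × α)) :
    walkWeight w (l ++ l') = walkWeight w l + walkWeight w l' := by
  simp [walkWeight]

theorem List.Perm.walkWeight_eq (w : α → α → ℤ) {l' : List (α × α)} (h : l ~ l') :
    walkWeight w l = walkWeight w l' :=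
  (h.map _).sum_eq

theorem walkWeight_map (w : β → β → ℤ) (g : α → β) (l : List (α × α)) :
    walkWeight w (l.map (Prod.map g g)) = walkWeight (fun a b => w (g a) (g b)) l := by
  simp [walkWeight, Function.comp_def]

theorem IsWalk.reflTransGen_of_mem {e f : α × α} {t : List (α × α)}
    (h : IsWalk A (e :: t)) (hf : f ∈ e :: t) : Relation.ReflTransGen A e.1 f.1 := by
  induction t generalizing e with
  | nil => rw [mem_singleton.mp hf]
  | cons g t ih =>
    obtain ⟨hedges, hchain⟩ := h
    obtain ⟨hjoin, htail⟩ := isChain_cons_cons.mp hchain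
    rcases mem_cons.mp hf with rfl | hf
    · rfl
    · have hstep : A e.1 g.1 := hjoin ▸ hedges e mem_cons_self
      exact .head hstep (ih ⟨fun x hx => hedges x (mem_cons_of_mem e hx), htail⟩ hf)

-- Through `Cycle.Chain`, invariance of `IsCycle` under rotation comes for free.
theorem isCycle_iff_chain : IsCycle A l ↔
    l ≠ [] ∧ (∀ e ∈ l, A e.1 e.2) ∧ Cycle.Chain (fun e f : α × α => e.2 = f.1) (l : Cycle _) := by
  rcases l with _ | ⟨a, t⟩
  · simp [IsCycle]
  · rw [Cycle.chain_coe_cons, ← cons_append, isChain_append]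
    simp only [IsCycle, IsWalk, getLast?_eq_getLast_of_ne_nil (cons_ne_nil a t), head?_cons,
      Option.map_some, Option.some.injEq, Option.mem_def, forall_eq', isChain_singleton]
    tauto

namespace IsCycle

theorem of_isRotated {l' : List (α × α)} (h : IsCycle A l) (hr : l ~r l') : IsCycle A l' := by
  obtain ⟨hne, hedges, hchain⟩ := isCycle_iff_chain.mp h
  exact isCycle_iff_chain.mpr ⟨fun h' => hne (isRotated_nil_iff.mp (h' ▸ hr)),
    fun e he => hedges e (hr.mem_iff.mpr he), Cycle.coe_eq_coe.mpr hr ▸ hchain⟩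

theorem map {B : β → β → Prop} (g : α → β) (hg : ∀ a b, A a b → B (g a) (g b))
    (h : IsCycle A l) : IsCycle B (l.map (Prod.map g g)) := by
  obtain ⟨hne, hedges, hchain⟩ := isCycle_iff_chain.mp h
  refine isCycle_iff_chain.mpr ⟨by simpa using hne, fun e he => ?_, ?_⟩
  · obtain ⟨x, hx, rfl⟩ := mem_map.mp he
    exact hg _ _ (hedges x hx)
  · rw [← Cycle.map_coe, Cycle.chain_map]
    exact hchain.imp fun e f hef => congrArg g hef

theorem sameSCC (h : IsCycle A l) {x y : α} (hx : x ∈ l.map Prod.fst) (hy : y ∈ l.map Prod.fst) :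
    SameSCC A x y := by
  suffices reach : ∀ x ∈ l.map Prod.fst, ∀ y ∈ l.map Prod.fst, Relation.ReflTransGen A x y from
    ⟨reach x hx y hy, reach y hy x hx⟩
  intro x hx y hy
  obtain ⟨e, he, rfl⟩ := mem_map.mp hx
  obtain ⟨f, hf, rfl⟩ := mem_map.mp hy
  obtain ⟨s, t, rfl⟩ := append_of_mem he
  have hrot : IsCycle A (e :: t ++ s) := h.of_isRotated isRotated_append
  exact hrot.1.reflTransGen_of_mem (by simpa [or_comm, or_left_comm] using hf)

theorem split {e f : α × α} {M N : List (α × α)} (h : IsCycle A (e :: M ++ f :: N))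
    (hef : e.1 = f.1) : IsCycle A (e :: M) ∧ IsCycle A (f :: N) := by
  obtain ⟨⟨hedges, hchain⟩, -, hclose⟩ := h
  obtain ⟨hchainM, hchainN, hjoin⟩ := isChain_append.mp hchain
  rw [getLast?_append, getLast?_eq_getLast_of_ne_nil (cons_ne_nil f N)] at hclose
  refine ⟨⟨⟨fun x hx => hedges x (mem_append_left _ hx), hchainM⟩, cons_ne_nil e M, ?_⟩,
    ⟨⟨fun x hx => hedges x (mem_append_right _ hx), hchainN⟩, cons_ne_nil f N, ?_⟩⟩
  · simpa [getLast?_eq_getLast_of_ne_nil (cons_ne_nil e M), hef] using hjoin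
  · simpa [getLast?_eq_getLast_of_ne_nil (cons_ne_nil f N), hef] using hclose

theorem exists_perm_append_of_not_nodup (h : IsCycle A l) (hl : ¬(l.map Prod.fst).Nodup) :
    ∃ M N, IsCycle A M ∧ IsCycle A N ∧ l ~ M ++ N := by
  obtain ⟨P, e, Q, f, R, rfl, hef⟩ := exists_eq_append_cons_append_cons_of_not_nodup_map hl
  have hrot : P ++ e :: Q ++ f :: R ~r e :: Q ++ f :: (R ++ P) := by
    simpa using isRotated_append (l := P) (l' := e :: Q ++ f :: R)
  obtain ⟨hM, hN⟩ := (h.of_isRotated hrot).split hef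
  exact ⟨_, _, hM, hN, hrot.perm⟩

end IsCycle

end Walks

section SignCoherent

variable {V : Type*} {A : V → V → Prop} {w : V → V → ℤ}

def SCCSignCoherent (A : V → V → Prop) (w : V → V → ℤ) : Prop :=
  ∀ v : V,
    (∀ l, IsCycle A l → (∀ x ∈ l.map Prod.fst, SameSCC A v x) → 0 ≤ walkWeight w l) ∨
    (∀ l, IsCycle A l → (∀ x ∈ l.map Prod.fst, SameSCC A v x) → walkWeight w l ≤ 0)

theorem IsCycle.walkWeight_eq_zero_of_perm_append (hscc : SCCSignCoherent A w)
    {L M N : List (V × V)} (hL : IsCycle A L) (hM : IsCycle A M) (hN : IsCycle A N)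
    (hperm : L ~ M ++ N) (hzero : walkWeight w L = 0) :
    walkWeight w M = 0 ∧ walkWeight w N = 0 := by
  obtain ⟨e, he⟩ := exists_mem_of_ne_nil L hL.2.1
  have hsplit : walkWeight w L = walkWeight w M + walkWeight w N :=
    (hperm.walkWeight_eq w).trans (walkWeight_append w M N)
  have hsource : ∀ K : List (V × V), (∀ f ∈ K, f ∈ L) →
      ∀ x ∈ K.map Prod.fst, SameSCC A e.1 x := by
    intro K hK x hx
    obtain ⟨f, hf, rfl⟩ := mem_map.mp hx
    exact hL.sameSCC (mem_map_of_mem he) (mem_map_of_mem (hK f hf))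
  have hMsub : ∀ f ∈ M, f ∈ L := fun f hf => hperm.mem_iff.mpr (mem_append_left N hf)
  have hNsub : ∀ f ∈ N, f ∈ L := fun f hf => hperm.mem_iff.mpr (mem_append_right M hf)
  rcases hscc e.1 with hpos | hneg
  · have := hpos M hM (hsource M hMsub)
    have := hpos N hN (hsource N hNsub)
    omega
  · have := hneg M hM (hsource M hMsub)
    have := hneg N hN (hsource N hNsub)
    omega

theorem exists_shorter_prodAdj_cycle [Fintype V] (hscc : SCCSignCoherent A w)
    {L : List ((V × V) × (V × V))} (hL : IsCycle (prodAdj A) L)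
    (h₁ : walkWeight (fun p q => w p.1 q.1) L = 0) (h₂ : walkWeight (fun p q => w p.2 q.2) L ≠ 0)
    (hlen : Fintype.card V ^ 2 < L.length) :
    ∃ L' : List ((V × V) × (V × V)), IsCycle (prodAdj A) L' ∧
      walkWeight (fun p q => w p.1 q.1) L' = 0 ∧
      walkWeight (fun p q => w p.2 q.2) L' ≠ 0 ∧ L'.length < L.length := by
  have hdup : ¬(L.map Prod.fst).Nodup := fun hnodup => by
    have := hnodup.length_le_card
    rw [length_map, Fintype.card_prod, ← sq] at this
    omega
  obtain ⟨M, N, hM, hN, hperm⟩ := hL.exists_perm_append_of_not_nodup hdup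
  have hfst : ∀ {K}, IsCycle (prodAdj A) K → IsCycle A (K.map (Prod.map Prod.fst Prod.fst)) :=
    IsCycle.map Prod.fst fun _ _ h => h.1
  have hzero := (hfst hL).walkWeight_eq_zero_of_perm_append hscc (hfst hM) (hfst hN)
    (by simpa using hperm.map (Prod.map Prod.fst Prod.fst))
    (by rwa [walkWeight_map])
  simp only [walkWeight_map] at hzero
  have hlength : L.length = M.length + N.length := by rw [hperm.length_eq, length_append]
  have hMpos := length_pos_iff.mpr hM.2.1
  have hNpos := length_pos_iff.mpr hN.2.1
  rw [hperm.walkWeight_eq, walkWeight_append] at h₂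
  by_cases hM₂ : walkWeight (fun p q => w p.2 q.2) M = 0
  · exact ⟨N, hN, hzero.2, by omega, by omega⟩
  · exact ⟨M, hM, hzero.1, hM₂, by omega⟩

end SignCoherent

theorem stmt12_general {V : Type*} [Fintype V] (A : V → V → Prop) (w : V → V → ℤ)
    (hscc : ∀ v : V,
      (∀ l, IsCycle A l → (∀ x ∈ l.map Prod.fst, SameSCC A v x) → 0 ≤ walkWeight w l) ∨
      (∀ l, IsCycle A l → (∀ x ∈ l.map Prod.fst, SameSCC A v x) → walkWeight w l ≤ 0))
    (hex : ∃ L : List ((V × V) × (V × V)), IsCycle (prodAdj A) L ∧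
      walkWeight (fun p q => w p.1 q.1) L = 0 ∧
      walkWeight (fun p q => w p.2 q.2) L ≠ 0) :
    ∃ L : List ((V × V) × (V × V)), IsCycle (prodAdj A) L ∧
      walkWeight (fun p q => w p.1 q.1) L = 0 ∧
      walkWeight (fun p q => w p.2 q.2) L ≠ 0 ∧
      L.length ≤ (Fintype.card V) ^ 2 := by
  obtain ⟨L, ⟨hL, h₁, h₂⟩, hmin⟩ := (measure List.length).wf.has_min _ hex
  refine ⟨L, hL, h₁, h₂, not_lt.mp fun hlen => ?_⟩
  obtain ⟨L', hL', h₁', h₂', hshorter⟩ := exists_shorter_prodAdj_cycle hscc hL h₁ h₂ hlen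
  exact hmin L' ⟨hL', h₁', h₂'⟩ hshorter

/-- In a finite graph whose cycles have weight 0 or absolute weight ≥ 1, same sign
within each SCC: if in the product graph (pairs of vertices) some cycle has one
traversal of weight 0 and one of nonzero weight, then such a cycle of length at
most `B = n²` exists. -/
theorem stmt12 {V : Type*} [Fintype V] (A : V → V → Prop) (w : V → V → ℤ)
    (hsimple01 : ∀ l, IsCycle A l → walkWeight w l = 0 ∨ 1 ≤ |walkWeight w l|)
    (hscc : ∀ v : V,
      (∀ l, IsCycle A l → (∀ x ∈ l.map Prod.fst, SameSCC A v x) → 0 ≤ walkWeight w l) ∨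
      (∀ l, IsCycle A l → (∀ x ∈ l.map Prod.fst, SameSCC A v x) → walkWeight w l ≤ 0))
    (hex : ∃ L : List ((V × V) × (V × V)), IsCycle (prodAdj A) L ∧
      walkWeight (fun p q => w p.1 q.1) L = 0 ∧
      walkWeight (fun p q => w p.2 q.2) L ≠ 0) :
    ∃ L : List ((V × V) × (V × V)), IsCycle (prodAdj A) L ∧
      walkWeight (fun p q => w p.1 q.1) L = 0 ∧
      walkWeight (fun p q => w p.2 q.2) L ≠ 0 ∧
      L.length ≤ (Fintype.card V) ^ 2 :=
  stmt12_general A w hscc hex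
end

section
/- Let X and Y be two games (transition systems with payoffs) that are related by a bisimulation R such that whenever (x, y) ∈ R, every move from x can be matched by a move from y to an R-related pair and vice versa, respecting player ownership, and such that the payoffs of any two R-related maximal plays differ by at most α. Then for any (x, y) ∈ R, |Val_X(x) - Val_Y(y)| ≤ α. -/
open Classical

/-- The history of the play from `s` when Min plays `σ` (at Min states) and Max
plays `τ` (elsewhere), each strategy mapping the history to the next state. -/
noncomputable def histList {S : Type*} (MinV : Set S) (σ τ : List S → S) (s : S) :
    ℕ → List S
  | 0 => [s]
  | n + 1 =>
      let h := histList MinV σ τ s n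
      h ++ [if h.getLastD s ∈ MinV then σ h else τ h]

/-- The state visited at step `n` of the play. -/
noncomputable def playSeq {S : Type*} (MinV : Set S) (σ τ : List S → S) (s : S)
    (n : ℕ) : S :=
  (histList MinV σ τ s n).getLastD s

/-- A strategy is valid if it always proposes a legal move. -/
def ValidStrat {S : Type*} (M : S → S → Prop) (σ : List S → S) : Prop :=
  ∀ (l : List S) (x : S), l.getLast? = some x → M x (σ l)

/-- The (inf-sup) value of a game with move relation `M`, Min states `MinV`, and
payoff `P` on (maximal) plays. -/
noncomputable def gameVal {S : Type*} (M : S → S → Prop) (MinV : Set S)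
    (P : (ℕ → S) → EReal) (s : S) : EReal :=
  ⨅ σ : {σ : List S → S // ValidStrat M σ},
    ⨆ τ : {τ : List S → S // ValidStrat M τ},
      P (playSeq MinV σ.1 τ.1 s)

/-- The sup-inf value of the game. -/
noncomputable def gameValSupInf {S : Type*} (M : S → S → Prop) (MinV : Set S)
    (P : (ℕ → S) → EReal) (s : S) : EReal :=
  ⨆ τ : {τ : List S → S // ValidStrat M τ},
    ⨅ σ : {σ : List S → S // ValidStrat M σ},
      P (playSeq MinV σ.1 τ.1 s)

/-!
Fix a Max strategy `τx` in `X` and a Min strategy `σy` in `Y`. Run them simultaneously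
through the bisimulation: at a Min state `σy` moves in `Y`, at a Max state `τx` moves in `X`,
and the other game answers with an `R`-related move. This yields two `R`-related plays, which
are realised by some Min strategy `σx` against `τx` and some Max strategy `τy` against `σy`
(follow the play, and fall back to any valid strategy off it). Hence
`⨅ σ, P_X(σ, τx) ≤ P_Y(σy, τy) + α ≤ ⨆ τ, P_Y(σy, τ) + α`, i.e. the sup-inf value of `X` is at
most the inf-sup value of `Y` plus `α`; determinacy of `X` and the symmetric argument finish.
-/

def seqPrefix {S : Type*} (p : ℕ → S) (n : ℕ) : List S :=
  (List.range (n + 1)).map p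

section seqPrefix

variable {S T : Type*} (p : ℕ → S) (n : ℕ)

theorem seqPrefix_succ : seqPrefix p (n + 1) = seqPrefix p n ++ [p (n + 1)] := by
  rw [seqPrefix, List.range_succ, List.map_append]; rfl

theorem seqPrefix_eq_map_range_append : seqPrefix p n = (List.range n).map p ++ [p n] := by
  rw [seqPrefix, List.range_succ, List.map_append]; rfl

@[simp] theorem length_seqPrefix : (seqPrefix p n).length = n + 1 := by simp [seqPrefix]

@[simp] theorem getLast?_seqPrefix : (seqPrefix p n).getLast? = some (p n) := by
  rw [seqPrefix_eq_map_range_append, List.getLast?_concat]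

@[simp] theorem getLastD_seqPrefix (d : S) : (seqPrefix p n).getLastD d = p n := by
  rw [seqPrefix_eq_map_range_append, List.getLastD_concat]

theorem map_seqPrefix (f : S → T) : (seqPrefix p n).map f = seqPrefix (f ∘ p) n :=
  List.map_map

end seqPrefix

section play

variable {S : Type*} {M : S → S → Prop} {MinV : Set S} {σ τ : List S → S} {s : S}

theorem getLast?_histList (n : ℕ) :
    (histList MinV σ τ s n).getLast? = some (playSeq MinV σ τ s n) := by
  cases n <;> simp [histList, playSeq]

theorem playSeq_succ (n : ℕ) :
    playSeq MinV σ τ s (n + 1) =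
      if playSeq MinV σ τ s n ∈ MinV then σ (histList MinV σ τ s n)
      else τ (histList MinV σ τ s n) := by
  simp only [playSeq, histList, List.getLastD_concat]
  rfl

theorem playSeq_move (hσ : ValidStrat M σ) (hτ : ValidStrat M τ) (n : ℕ) :
    M (playSeq MinV σ τ s n) (playSeq MinV σ τ s (n + 1)) := by
  rw [playSeq_succ]
  split_ifs
  · exact hσ _ _ (getLast?_histList n)
  · exact hτ _ _ (getLast?_histList n)

theorem playSeq_eq_of_forall {p : ℕ → S}
    (hp : ∀ n, p (n + 1) =
      if p n ∈ MinV then σ (seqPrefix p n) else τ (seqPrefix p n)) :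
    playSeq MinV σ τ (p 0) = p := by
  have hist : ∀ n, histList MinV σ τ (p 0) n = seqPrefix p n := by
    intro n
    induction n with
    | zero => rfl
    | succ n ih => rw [histList, ih, getLastD_seqPrefix, seqPrefix_succ, hp]
  funext n
  rw [playSeq, hist, getLastD_seqPrefix]

end play

noncomputable def followStrat {S : Type*} (p : ℕ → S) (ρ : List S → S) (l : List S) : S :=
  if l = seqPrefix p (l.length - 1) then p l.length else ρ l

section followStrat

variable {S : Type*} {M : S → S → Prop} {MinV : Set S} {p : ℕ → S} {ρ : List S → S}

theorem followStrat_seqPrefix (n : ℕ) : followStrat p ρ (seqPrefix p n) = p (n + 1) := by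
  simp [followStrat]

theorem validStrat_followStrat (hρ : ValidStrat M ρ) (hp : ∀ n, M (p n) (p (n + 1))) :
    ValidStrat M (followStrat p ρ) := by
  intro l x hx
  unfold followStrat
  split_ifs with hl
  · rw [hl, getLast?_seqPrefix, Option.some_inj] at hx
    have hlen : l.length = l.length - 1 + 1 := by rw [hl, length_seqPrefix]; rfl
    rw [← hx, hlen]
    exact hp _
  · exact hρ l x hx

theorem exists_validStrat_playSeq_eq_of_max (hρ : ValidStrat M ρ)
    (hp : ∀ n, M (p n) (p (n + 1)))
    (hmax : ∀ n, p n ∉ MinV → p (n + 1) = ρ (seqPrefix p n)) :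
    ∃ σ, ValidStrat M σ ∧ playSeq MinV σ ρ (p 0) = p := by
  refine ⟨followStrat p ρ, validStrat_followStrat hρ hp, playSeq_eq_of_forall fun n => ?_⟩
  split_ifs with hn
  · exact (followStrat_seqPrefix n).symm
  · exact hmax n hn

theorem exists_validStrat_playSeq_eq_of_min (hρ : ValidStrat M ρ)
    (hp : ∀ n, M (p n) (p (n + 1)))
    (hmin : ∀ n, p n ∈ MinV → p (n + 1) = ρ (seqPrefix p n)) :
    ∃ τ, ValidStrat M τ ∧ playSeq MinV ρ τ (p 0) = p := by
  refine ⟨followStrat p ρ, validStrat_followStrat hρ hp, playSeq_eq_of_forall fun n => ?_⟩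
  split_ifs with hn
  · exact hmin n hn
  · exact (followStrat_seqPrefix n).symm

end followStrat

theorem exists_seq_of_forall_exists_append {Z : Type*} (inv : Z → Prop)
    (step : List Z → Z → Prop) (z₀ : Z) (h₀ : inv z₀)
    (hstep : ∀ l z, inv z → ∃ z', inv z' ∧ step (l ++ [z]) z') :
    ∃ s : ℕ → Z, s 0 = z₀ ∧ ∀ n, inv (s n) ∧ step (seqPrefix s n) (s (n + 1)) := by
  choose! f hf using hstep
  let g : ℕ → List Z × Z := fun n => Nat.rec ([], z₀) (fun _ h => (h.1 ++ [h.2], f h.1 h.2)) n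
  have hg : ∀ n, (g n).1 = (List.range n).map (fun k => (g k).2) ∧ inv (g n).2 := by
    intro n
    induction n with
    | zero => exact ⟨rfl, h₀⟩
    | succ n ih =>
      refine ⟨?_, (hf _ _ ih.2).1⟩
      show (g n).1 ++ [(g n).2] = _
      rw [ih.1, List.range_succ, List.map_append]; rfl
  refine ⟨fun n => (g n).2, rfl, fun n => ⟨(hg n).2, ?_⟩⟩
  rw [seqPrefix_eq_map_range_append, ← (hg n).1]
  exact (hf _ _ (hg n).2).2

def IsGameBisim {X Y : Type*} (Mx : X → X → Prop) (MinX : Set X) (My : Y → Y → Prop)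
    (MinY : Set Y) (R : X → Y → Prop) : Prop :=
  ∀ x y, R x y →
    (x ∈ MinX ↔ y ∈ MinY) ∧
    (∀ x', Mx x x' → ∃ y', My y y' ∧ R x' y') ∧
    (∀ y', My y y' → ∃ x', Mx x x' ∧ R x' y')

namespace IsGameBisim

variable {X Y : Type*} {Mx : X → X → Prop} {MinX : Set X} {My : Y → Y → Prop}
  {MinY : Set Y} {R : X → Y → Prop}

theorem flip (hR : IsGameBisim Mx MinX My MinY R) : IsGameBisim My MinY Mx MinX (flip R) :=
  fun y x hxy =>
    ⟨(hR x y hxy).1.symm, fun y' hy => (hR x y hxy).2.2 y' hy,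
      fun x' hx => (hR x y hxy).2.1 x' hx⟩

theorem exists_step (hR : IsGameBisim Mx MinX My MinY R) {τx : List X → X}
    {σy : List Y → Y} (hτx : ValidStrat Mx τx) (hσy : ValidStrat My σy)
    {lx : List X} {ly : List Y} {x : X} {y : Y} (hx : lx.getLast? = some x)
    (hy : ly.getLast? = some y) (hxy : R x y) :
    ∃ x' y', R x' y' ∧ Mx x x' ∧ My y y' ∧
      (x ∈ MinX → y' = σy ly) ∧ (x ∉ MinX → x' = τx lx) := by
  by_cases hmin : x ∈ MinX
  · obtain ⟨x', hx', hxy'⟩ := (hR x y hxy).2.2 _ (hσy ly y hy)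
    exact ⟨x', _, hxy', hx', hσy ly y hy, fun _ => rfl, absurd hmin⟩
  · obtain ⟨y', hy', hxy'⟩ := (hR x y hxy).2.1 _ (hτx lx x hx)
    exact ⟨_, y', hxy', hτx lx x hx, hy', (absurd · hmin), fun _ => rfl⟩

theorem exists_validStrat_playSeq_rel (hR : IsGameBisim Mx MinX My MinY R)
    {τx : List X → X} {σy : List Y → Y} (hτx : ValidStrat Mx τx) (hσy : ValidStrat My σy)
    {x : X} {y : Y} (hxy : R x y) :
    ∃ σx, ValidStrat Mx σx ∧ ∃ τy, ValidStrat My τy ∧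
      ∀ n, R (playSeq MinX σx τx x n) (playSeq MinY σy τy y n) := by
  obtain ⟨s, hs0, hs⟩ := exists_seq_of_forall_exists_append (fun z : X × Y => R z.1 z.2)
    (fun l z' => Mx (l.getLastD (x, y)).1 z'.1 ∧ My (l.getLastD (x, y)).2 z'.2 ∧
      ((l.getLastD (x, y)).1 ∈ MinX → z'.2 = σy (l.map Prod.snd)) ∧
      ((l.getLastD (x, y)).1 ∉ MinX → z'.1 = τx (l.map Prod.fst))) (x, y) hxy
    (fun l z hz => by
      obtain ⟨x', y', hxy', h⟩ := hR.exists_step hτx hσy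
        (lx := (l ++ [z]).map Prod.fst) (ly := (l ++ [z]).map Prod.snd) (by simp) (by simp) hz
      exact ⟨(x', y'), hxy', by simpa using h⟩)
  simp only [getLastD_seqPrefix, map_seqPrefix] at hs
  obtain ⟨σx, hσx, hp⟩ := exists_validStrat_playSeq_eq_of_max (MinV := MinX) hτx
    (fun n => (hs n).2.1) (fun n => (hs n).2.2.2.2)
  obtain ⟨τy, hτy, hq⟩ := exists_validStrat_playSeq_eq_of_min (MinV := MinY) hσy
    (fun n => (hs n).2.2.1)
    (fun n hn => (hs n).2.2.2.1 ((hR _ _ (hs n).1).1.2 hn))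
  refine ⟨σx, hσx, τy, hτy, fun n => ?_⟩
  simp only [hs0] at hp hq
  rw [hp, hq]
  exact (hs n).1

theorem gameValSupInf_le_gameVal_add (hR : IsGameBisim Mx MinX My MinY R)
    {Px : (ℕ → X) → EReal} {Py : (ℕ → Y) → EReal} {α : ℝ}
    (hpay : ∀ (p : ℕ → X) (q : ℕ → Y),
      (∀ i, Mx (p i) (p (i + 1))) → (∀ i, My (q i) (q (i + 1))) →
      (∀ i, R (p i) (q i)) → Px p ≤ Py q + (α : EReal))
    {x : X} {y : Y} (hxy : R x y) :
    gameValSupInf Mx MinX Px x ≤ gameVal My MinY Py y + (α : EReal) := by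
  refine iSup_le fun τx => ?_
  rw [gameVal, ← EReal.sub_le_iff_le_add (.inl (EReal.coe_ne_bot α)) (.inl (EReal.coe_ne_top α))]
  refine le_iInf fun σy => ?_
  rw [EReal.sub_le_iff_le_add (.inl (EReal.coe_ne_bot α)) (.inl (EReal.coe_ne_top α))]
  obtain ⟨σx, hσx, τy, hτy, hrel⟩ := hR.exists_validStrat_playSeq_rel τx.2 σy.2 hxy
  calc ⨅ σ : {σ // ValidStrat Mx σ}, Px (playSeq MinX σ.1 τx.1 x)
      ≤ Px (playSeq MinX σx τx.1 x) := iInf_le_of_le ⟨σx, hσx⟩ le_rfl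
    _ ≤ Py (playSeq MinY σy.1 τy y) + α :=
      hpay _ _ (playSeq_move hσx τx.2) (playSeq_move σy.2 hτy) hrel
    _ ≤ (⨆ τ : {τ // ValidStrat My τ}, Py (playSeq MinY σy.1 τ.1 y)) + α := by
      gcongr
      exact le_iSup_of_le ⟨τy, hτy⟩ le_rfl

end IsGameBisim

theorem stmt16_general {X Y : Type*}
    (Mx : X → X → Prop) (MinX : Set X) (Px : (ℕ → X) → EReal)
    (My : Y → Y → Prop) (MinY : Set Y) (Py : (ℕ → Y) → EReal)
    (R : X → Y → Prop) (α : ℝ)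
    (hmatch : ∀ x y, R x y →
      (x ∈ MinX ↔ y ∈ MinY) ∧
      (∀ x', Mx x x' → ∃ y', My y y' ∧ R x' y') ∧
      (∀ y', My y y' → ∃ x', Mx x x' ∧ R x' y'))
    (hpay : ∀ (p : ℕ → X) (q : ℕ → Y),
      (∀ i, Mx (p i) (p (i + 1))) → (∀ i, My (q i) (q (i + 1))) →
      (∀ i, R (p i) (q i)) →
      Px p ≤ Py q + (α : EReal) ∧ Py q ≤ Px p + (α : EReal))
    (hdetX : ∀ x, gameVal Mx MinX Px x = gameValSupInf Mx MinX Px x)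
    (hdetY : ∀ y, gameVal My MinY Py y = gameValSupInf My MinY Py y) :
    ∀ x y, R x y →
      gameVal Mx MinX Px x ≤ gameVal My MinY Py y + (α : EReal) ∧
      gameVal My MinY Py y ≤ gameVal Mx MinX Px x + (α : EReal) := by
  intro x y hxy
  constructor
  · rw [hdetX]
    exact IsGameBisim.gameValSupInf_le_gameVal_add hmatch
      (fun p q hp hq hpq => (hpay p q hp hq hpq).1) hxy
  · rw [hdetY]
    exact (IsGameBisim.flip hmatch).gameValSupInf_le_gameVal_add
      (fun q p hq hp hpq => (hpay p q hp hq hpq).2) hxy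

/-- If two determined games are related by a bisimulation `R` matching moves and
respecting player ownership, such that the payoffs of any two `R`-related maximal
plays differ by at most `α`, then the values of `R`-related states differ by at
most `α`. -/
theorem stmt16 {X Y : Type*}
    (Mx : X → X → Prop) (MinX : Set X) (Px : (ℕ → X) → EReal)
    (My : Y → Y → Prop) (MinY : Set Y) (Py : (ℕ → Y) → EReal)
    (R : X → Y → Prop) (α : ℝ) (hα : 0 ≤ α)
    (hmatch : ∀ x y, R x y →
      (x ∈ MinX ↔ y ∈ MinY) ∧
      (∀ x', Mx x x' → ∃ y', My y y' ∧ R x' y') ∧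
      (∀ y', My y y' → ∃ x', Mx x x' ∧ R x' y'))
    (hpay : ∀ (p : ℕ → X) (q : ℕ → Y),
      (∀ i, Mx (p i) (p (i + 1))) → (∀ i, My (q i) (q (i + 1))) →
      (∀ i, R (p i) (q i)) →
      Px p ≤ Py q + (α : EReal) ∧ Py q ≤ Px p + (α : EReal))
    (hdetX : ∀ x, gameVal Mx MinX Px x = gameValSupInf Mx MinX Px x)
    (hdetY : ∀ y, gameVal My MinY Py y = gameValSupInf My MinY Py y) :
    ∀ x y, R x y →
      gameVal Mx MinX Px x ≤ gameVal My MinY Py y + (α : EReal) ∧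
      gameVal My MinY Py y ≤ gameVal Mx MinX Px x + (α : EReal) :=
  stmt16_general Mx MinX Px My MinY Py R α hmatch hpay hdetX hdetY
end
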